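/- Let p be an odd prime, n ≥ 1, and R a commutative ring in which p·1 = 0. Let A = (Z/p)[ξ_1, …, ξ_{n−1}]. For (Z/p)-algebra homomorphisms θ, θ' : A → R, let f = X + Σ_{i=1}^{n−1} θ(ξ_i) X^{p^i} and g = X + Σ_{j=1}^{n−1} θ'(ξ_j) X^{p^j}. Then the algebra homomorphism θ'' : A → R determined by θ''(ξ_k) = Σ_{i+j=k, i,j ≥ 0} θ(ξ_i)^{p^j} · θ'(ξ_j) (with the conventions ξ_0 = 1, θ(ξ_0) = θ'(ξ_0) = 1) satisfies X + Σ_{k=1}^{n−1} θ''(ξ_k) X^{p^k} ≡ g(f(X)) (mod X^{p^n}). In other words, under the bijection θ ↦ X + Σ θ(ξ_i) X^{p^i}, the convolution determined by the comultiplication Δ(ξ_k) = Σ_{i=0}^{k} ξ_{k−i}^{p^i} ⊗ ξ_i corresponds to composition of truncated polynomials. -/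

import Mathlib

/-!
In characteristic `p` the Frobenius `x ↦ x ^ p ^ j` is additive, so
`(∑ⱼ bⱼ X^{p^j}) ∘ (∑ᵢ aᵢ X^{p^i}) = ∑ᵢ,ⱼ aᵢ^{p^j} bⱼ X^{p^{i+j}}`. Modulo `X^{p^n}` only the terms
with `i + j < n` survive, and grouping them by `k = i + j` gives the coefficients of `θ''`.
-/

open Polynomial

/-- `tval θ m` is `θ(ξ_m)`, with the convention `ξ_0 = 1` (so `tval θ 0 = 1`) and where
`ξ_{m+1}` is the `(m+1)`-st polynomial generator. -/
noncomputable def tval (p n : ℕ) (R : Type) [CommRing R] [Algebra (ZMod p) R]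
    (θ : MvPolynomial (Fin (n - 1)) (ZMod p) →ₐ[ZMod p] R) : ℕ → R
  | 0 => 1
  | m + 1 => if h : m < n - 1 then θ (MvPolynomial.X (⟨m, h⟩ : Fin (n - 1))) else 0

open Finset

theorem sum_C_mul_X_pow_char_pow_comp {R : Type*} [CommSemiring R] (p : ℕ) [Fact p.Prime]
    [CharP R p] (s t : Finset ℕ) (a b : ℕ → R) :
    (∑ j ∈ s, C (b j) * X ^ p ^ j).comp (∑ i ∈ t, C (a i) * X ^ p ^ i) =
      ∑ j ∈ s, ∑ i ∈ t, C (a i ^ p ^ j * b j) * X ^ p ^ (i + j) := by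
  rw [Polynomial.sum_comp]
  refine sum_congr rfl fun j _ => ?_
  rw [mul_comp, C_comp, X_pow_comp, sum_pow_char_pow, mul_sum]
  refine sum_congr rfl fun i _ => ?_
  rw [mul_pow, ← pow_mul, ← pow_add, ← C_pow, C_mul]
  ring

theorem sum_range_sum_antidiagonal_of_eq_zero {M : Type*} [AddCommMonoid M] {n : ℕ}
    {f : ℕ → ℕ → M} (hf : ∀ i j, n ≤ i + j → f i j = 0) :
    ∑ k ∈ range n, ∑ ij ∈ antidiagonal k, f ij.1 ij.2 = ∑ i ∈ range n, ∑ j ∈ range n, f i j := by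
  simp only [Nat.sum_antidiagonal_eq_sum_range_succ f, sum_range_diag_flip]
  refine sum_congr rfl fun i _ => sum_subset (range_subset_range.2 (n.sub_le i)) ?_
  intro j _ hj
  exact hf i j (by simp only [mem_range] at hj; omega)

theorem X_add_sum_Ico_eq_sum_range {R : Type*} [Semiring R] (p : ℕ) {n : ℕ} (hn : 1 ≤ n)
    (u : ℕ → R) (hu : u 0 = 1) :
    X + ∑ i ∈ Ico 1 n, C (u i) * X ^ p ^ i = ∑ i ∈ range n, C (u i) * X ^ p ^ i := by
  rw [sum_range_eq_add_Ico _ hn, hu]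
  simp

theorem mk_span_X_pow_C_mul_X_pow_eq_zero {R : Type*} [CommRing R] (r : R) {N M : ℕ}
    (h : N ≤ M) : Ideal.Quotient.mk (Ideal.span {(X : R[X]) ^ N}) (C r * X ^ M) = 0 := by
  rw [Ideal.Quotient.eq_zero_iff_mem, Ideal.mem_span_singleton]
  exact (pow_dvd_pow X h).mul_left _

section tval

variable {p n : ℕ} {R : Type} [CommRing R] [Algebra (ZMod p) R]

theorem tval_zero (θ : MvPolynomial (Fin (n - 1)) (ZMod p) →ₐ[ZMod p] R) :
    tval p n R θ 0 = 1 := rfl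

theorem tval_succ (θ : MvPolynomial (Fin (n - 1)) (ZMod p) →ₐ[ZMod p] R) {m : ℕ}
    (hm : m < n - 1) : tval p n R θ (m + 1) = θ (MvPolynomial.X ⟨m, hm⟩) :=
  dif_pos hm

theorem tval_eq_sum_antidiagonal (θ θ' θ'' : MvPolynomial (Fin (n - 1)) (ZMod p) →ₐ[ZMod p] R)
    (hθ'' : ∀ k : Fin (n - 1), θ'' (MvPolynomial.X k) =
      ∑ ij ∈ antidiagonal ((k : ℕ) + 1), tval p n R θ ij.1 ^ (p ^ ij.2) * tval p n R θ' ij.2)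
    {k : ℕ} (hk : k < n) :
    tval p n R θ'' k = ∑ ij ∈ antidiagonal k, tval p n R θ ij.1 ^ p ^ ij.2 * tval p n R θ' ij.2 := by
  cases k with
  | zero => simp [tval_zero]
  | succ m => rw [tval_succ θ'' (by omega), hθ'']

end tval

theorem stmt_5_general (p n : ℕ) (hp : p.Prime) (hn : 1 ≤ n)
    (R : Type) [CommRing R] [Algebra (ZMod p) R]
    (θ θ' θ'' : MvPolynomial (Fin (n - 1)) (ZMod p) →ₐ[ZMod p] R)
    (f g : Polynomial R)
    (hf : f = X + ∑ i ∈ Finset.Ico 1 n, C (tval p n R θ i) * X ^ (p ^ i))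
    (hg : g = X + ∑ j ∈ Finset.Ico 1 n, C (tval p n R θ' j) * X ^ (p ^ j))
    (hθ'' : ∀ k : Fin (n - 1),
      θ'' (MvPolynomial.X k) =
        ∑ ij ∈ Finset.HasAntidiagonal.antidiagonal ((k : ℕ) + 1),
          tval p n R θ ij.1 ^ (p ^ ij.2) * tval p n R θ' ij.2) :
    Ideal.Quotient.mk (Ideal.span {(X : Polynomial R) ^ (p ^ n)})
      (X + ∑ k ∈ Finset.Ico 1 n, C (tval p n R θ'' k) * X ^ (p ^ k)) =
    Ideal.Quotient.mk (Ideal.span {(X : Polynomial R) ^ (p ^ n)}) (g.comp f) := by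
  rcases subsingleton_or_nontrivial R with _ | _
  · exact congrArg _ (Subsingleton.elim _ _)
  have : Fact p.Prime := ⟨hp⟩
  have : CharP R p := charP_of_injective_algebraMap' (ZMod p) p
  simp only [hf, hg, X_add_sum_Ico_eq_sum_range p hn _ (tval_zero _),
    sum_C_mul_X_pow_char_pow_comp, map_sum]
  rw [sum_comm, ← sum_range_sum_antidiagonal_of_eq_zero fun i j hij =>
    mk_span_X_pow_C_mul_X_pow_eq_zero _ (Nat.pow_le_pow_right hp.pos hij)]
  refine sum_congr rfl fun k hk => ?_
  rw [tval_eq_sum_antidiagonal θ θ' θ'' hθ'' (mem_range.1 hk), map_sum, sum_mul, map_sum]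
  refine sum_congr rfl fun ij hij => ?_
  rw [mem_antidiagonal.1 hij]

/-- For an odd prime `p`, `n ≥ 1`, and a commutative ring `R` with `p·1 = 0`
(a `Z/p`-algebra), let `A = (Z/p)[ξ_1, …, ξ_{n-1}]`, and for `(Z/p)`-algebra maps
`θ, θ' : A → R` put `f = X + Σ_{i=1}^{n-1} θ(ξ_i) X^(p^i)`,
`g = X + Σ_{j=1}^{n-1} θ'(ξ_j) X^(p^j)`.  If `θ'' : A → R` is the algebra homomorphism with
`θ''(ξ_k) = Σ_{i+j=k} θ(ξ_i)^(p^j)·θ'(ξ_j)` (conventions `ξ_0 = 1`, `θ(ξ_0) = θ'(ξ_0) = 1`),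
then `X + Σ_{k=1}^{n-1} θ''(ξ_k) X^(p^k) ≡ g(f(X))  (mod X^(p^n))`: the convolution coming
from `Δ(ξ_k) = Σ ξ_{k-i}^(p^i) ⊗ ξ_i` corresponds to composition of truncated polynomials. -/
theorem stmt_5 (p n : ℕ) (hp : p.Prime) (hodd : Odd p) (hn : 1 ≤ n)
    (R : Type) [CommRing R] [Algebra (ZMod p) R]
    (θ θ' θ'' : MvPolynomial (Fin (n - 1)) (ZMod p) →ₐ[ZMod p] R)
    (f g : Polynomial R)
    (hf : f = X + ∑ i ∈ Finset.Ico 1 n, C (tval p n R θ i) * X ^ (p ^ i))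
    (hg : g = X + ∑ j ∈ Finset.Ico 1 n, C (tval p n R θ' j) * X ^ (p ^ j))
    (hθ'' : ∀ k : Fin (n - 1),
      θ'' (MvPolynomial.X k) =
        ∑ ij ∈ Finset.HasAntidiagonal.antidiagonal ((k : ℕ) + 1),
          tval p n R θ ij.1 ^ (p ^ ij.2) * tval p n R θ' ij.2) :
    Ideal.Quotient.mk (Ideal.span {(X : Polynomial R) ^ (p ^ n)})
      (X + ∑ k ∈ Finset.Ico 1 n, C (tval p n R θ'' k) * X ^ (p ^ k)) =
    Ideal.Quotient.mk (Ideal.span {(X : Polynomial R) ^ (p ^ n)}) (g.comp f) :=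
  stmt_5_general p n hp hn R θ θ' θ'' f g hf hg hθ''
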